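/- arXiv:2104.13945 — 2 statements merged into one kernel-verified Lean document; each statement's English description precedes it below -/
import Mathlib

section
/- Let X be a centered process with fractional Brownian motion covariance of Hurst parameter H and scale σ, and fix t ∈ (0,1) and γ ∈ (0,1). Then the second-moment version of the Hölder exponent estimator converges to the Hurst parameter: lim_{N→∞} (1/2)((1 − γ) − log(E(V_N^{(1)}(t))) / log N) = H. -/
/-!
For a second difference with step `h` of a process with fBm covariance, expanding the square
gives `E (X a - 2 X (a + h) + X (a + 2h))² = σ² (4 - 2^(2H)) h^(2H)`, so with `h = 1/N` the
expected quadratic variation is `#v_N(t) · σ² (4 - 2^(2H)) N^(-2H)`. For large `N` the window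
`v_N(t)` is the set of integers in `[N t - N^(1-γ), N t + N^(1-γ)]`, of cardinality between
`N^(1-γ)` and `3 N^(1-γ)`. Hence `E V_N = Θ(N^(1-γ-2H))` and
`log (E V_N) / log N → 1 - γ - 2H`.
-/

open MeasureTheory Filter

/-- The neighbourhood index set `v_N(t) = {p ∈ ℕ : 0 ≤ p ≤ N-2, |t - p/N| ≤ N^(-γ)}`. -/
noncomputable def vN (t γ : ℝ) (N : ℕ) : Finset ℕ :=
  (Finset.range (N - 1)).filter fun p => |t - (p : ℝ) / (N : ℝ)| ≤ (N : ℝ) ^ (-γ)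

open Topology
open scoped Finset

lemma tendsto_log_div_log_of_le_of_le {f : ℕ → ℝ} {c₁ c₂ α : ℝ} (hc₁ : 0 < c₁)
    (hf : ∀ᶠ N : ℕ in atTop,
      c₁ * (N : ℝ) ^ α ≤ f N ∧ f N ≤ c₂ * (N : ℝ) ^ α) :
    Tendsto (fun N => Real.log (f N) / Real.log N) atTop (𝓝 α) := by
  have hlog : Tendsto (fun N : ℕ => Real.log N) atTop atTop :=
    Real.tendsto_log_atTop.comp tendsto_natCast_atTop_atTop
  have hlim : ∀ c : ℝ, Tendsto (fun N : ℕ => α + Real.log c / Real.log N) atTop (𝓝 α) :=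
    fun c => by simpa using tendsto_const_nhds.add (tendsto_const_nhds.div_atTop hlog)
  have hbounds : ∀ᶠ N : ℕ in atTop,
      α + Real.log c₁ / Real.log N ≤ Real.log (f N) / Real.log N ∧
        Real.log (f N) / Real.log N ≤ α + Real.log c₂ / Real.log N := by
    filter_upwards [hf, hlog.eventually_gt_atTop 0, eventually_gt_atTop 0] with N hN hlogN hN0
    have hN' : (0 : ℝ) < N := by exact_mod_cast hN0
    have hpow : 0 < (N : ℝ) ^ α := Real.rpow_pos_of_pos hN' α
    have hc₂ : 0 < c₂ := pos_of_mul_pos_left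
      ((mul_pos hc₁ hpow).trans_le (hN.1.trans hN.2)) hpow.le
    have hlog_mul : ∀ c : ℝ, 0 < c →
        Real.log (c * (N : ℝ) ^ α) / Real.log N = α + Real.log c / Real.log N := by
      intro c hc
      rw [Real.log_mul hc.ne' hpow.ne', Real.log_rpow hN']
      field_simp
      ring
    rw [← hlog_mul c₁ hc₁, ← hlog_mul c₂ hc₂]
    exact ⟨div_le_div_of_nonneg_right (Real.log_le_log (mul_pos hc₁ hpow) hN.1) hlogN.le,
      div_le_div_of_nonneg_right
        (Real.log_le_log ((mul_pos hc₁ hpow).trans_le hN.1) hN.2) hlogN.le⟩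
  exact tendsto_of_tendsto_of_tendsto_of_le_of_le' (hlim c₁) (hlim c₂)
    (hbounds.mono fun _ h => h.1) (hbounds.mono fun _ h => h.2)

lemma integral_sq_sub_two_mul_add {ι Ω : Type*} [MeasurableSpace Ω] {P : Measure Ω}
    {X : ι → Ω → ℝ} (hX : ∀ i, MemLp (X i) 2 P) (a b c : ι) :
    ∫ ω, (X a ω - 2 * X b ω + X c ω) ^ 2 ∂P =
      ∫ ω, X a ω * X a ω ∂P + 4 * ∫ ω, X b ω * X b ω ∂P + ∫ ω, X c ω * X c ω ∂P
        - 4 * ∫ ω, X a ω * X b ω ∂P + 2 * ∫ ω, X a ω * X c ω ∂P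
        - 4 * ∫ ω, X b ω * X c ω ∂P := by
  have hI : ∀ i j, Integrable (fun ω => X i ω * X j ω) P := fun i j =>
    (hX i).integrable_mul (hX j)
  have hexpand : (fun ω => (X a ω - 2 * X b ω + X c ω) ^ 2) = fun ω =>
      X a ω * X a ω + 4 * (X b ω * X b ω) + X c ω * X c ω
        - 4 * (X a ω * X b ω) + 2 * (X a ω * X c ω) - 4 * (X b ω * X c ω) := by
    funext ω; ring
  rw [hexpand, integral_sub, integral_add, integral_sub, integral_add, integral_add,
    integral_const_mul, integral_const_mul, integral_const_mul, integral_const_mul]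
  all_goals fun_prop

noncomputable def fbmCov (σ H s t : ℝ) : ℝ :=
  σ ^ 2 / 2 * (|s| ^ (2 * H) + |t| ^ (2 * H) - |s - t| ^ (2 * H))

lemma fbmCov_second_diff {σ H a b c h : ℝ} (hH : 0 < H) (hh : 0 ≤ h) (hab : b - a = h)
    (hbc : c - b = h) :
    fbmCov σ H a a + 4 * fbmCov σ H b b + fbmCov σ H c c - 4 * fbmCov σ H a b
      + 2 * fbmCov σ H a c - 4 * fbmCov σ H b c = σ ^ 2 * (4 - 2 ^ (2 * H)) * h ^ (2 * H) := by
  have hab' : |a - b| = h := by rw [abs_sub_comm, hab, abs_of_nonneg hh]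
  have hbc' : |b - c| = h := by rw [abs_sub_comm, hbc, abs_of_nonneg hh]
  have hac' : |a - c| ^ (2 * H) = 2 ^ (2 * H) * h ^ (2 * H) := by
    rw [show a - c = -(2 * h) by linarith, abs_neg, abs_of_nonneg (by positivity),
      Real.mul_rpow zero_le_two hh]
  simp only [fbmCov, sub_self, abs_zero, Real.zero_rpow (by positivity : 2 * H ≠ 0),
    hab', hbc', hac']
  ring

lemma two_rpow_two_mul_lt_four {H : ℝ} (hH : H < 1) : (2 : ℝ) ^ (2 * H) < 4 := by
  have h := Real.rpow_lt_rpow_of_exponent_lt one_lt_two (by linarith : 2 * H < 2)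
  rwa [Real.rpow_two, show (2 : ℝ) ^ 2 = 4 by norm_num] at h

lemma card_Icc_ceil_floor_bounds {L U : ℝ} (hL : 0 ≤ L) (hLU : L ≤ U) :
    U - L - 1 ≤ (#(Finset.Icc ⌈L⌉₊ ⌊U⌋₊) : ℝ) ∧
      (#(Finset.Icc ⌈L⌉₊ ⌊U⌋₊) : ℝ) ≤ U - L + 1 := by
  have hceil : (⌈L⌉₊ : ℝ) < L + 1 := Nat.ceil_lt_add_one hL
  have hfloor : U < (⌊U⌋₊ : ℝ) + 1 := Nat.lt_floor_add_one U
  have hle : ⌈L⌉₊ ≤ ⌊U⌋₊ + 1 := by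
    have : (⌈L⌉₊ : ℝ) < ⌊U⌋₊ + 2 := by linarith
    have : ⌈L⌉₊ < ⌊U⌋₊ + 2 := by exact_mod_cast this
    omega
  rw [Nat.card_Icc, Nat.cast_sub hle, Nat.cast_add_one]
  constructor
  · linarith
  · linarith [Nat.le_ceil L, Nat.floor_le (hL.trans hLU)]

lemma vN_eq_Icc {t γ : ℝ} {N : ℕ} (hN : 0 < N) (hlo : (N : ℝ) ^ (-γ) ≤ t)
    (hhi : t + (N : ℝ) ^ (-γ) + 2 / N ≤ 1) :
    vN t γ N =
      Finset.Icc ⌈N * (t - (N : ℝ) ^ (-γ))⌉₊ ⌊N * (t + (N : ℝ) ^ (-γ))⌋₊ := by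
  set e := (N : ℝ) ^ (-γ)
  have hN' : (0 : ℝ) < N := by exact_mod_cast hN
  have he : 0 ≤ e := by positivity
  have hupper : N * (t + e) ≤ N - 2 := by
    have := mul_le_mul_of_nonneg_left hhi hN'.le
    rwa [mul_add, mul_div_cancel₀ _ hN'.ne', mul_one, ← le_sub_iff_add_le] at this
  ext p
  rw [vN, Finset.mem_filter, Finset.mem_range, Finset.mem_Icc, Nat.ceil_le,
    Nat.le_floor_iff (mul_nonneg hN'.le (by linarith)), abs_le, neg_le_sub_iff_le_add,
    sub_le_comm, ← le_div_iff₀' hN', ← div_le_iff₀' hN']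
  refine ⟨fun h => ⟨h.2.2, by linarith [h.2.1]⟩, fun h => ⟨?_, by linarith [h.2], h.1⟩⟩
  have : (p : ℝ) + 2 ≤ N := by linarith [(div_le_iff₀' hN').1 h.2]
  have : p + 2 ≤ N := by exact_mod_cast this
  omega

lemma eventually_card_vN_bounds {t γ : ℝ} (ht : t ∈ Set.Ioo 0 1) (hγ : γ ∈ Set.Ioo 0 1) :
    ∀ᶠ N : ℕ in atTop,
      (N : ℝ) ^ (1 - γ) ≤ #(vN t γ N) ∧
        (#(vN t γ N) : ℝ) ≤ 3 * (N : ℝ) ^ (1 - γ) := by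
  have hcast := tendsto_natCast_atTop_atTop (R := ℝ)
  have he : Tendsto (fun N : ℕ => (N : ℝ) ^ (-γ)) atTop (𝓝 0) :=
    (tendsto_rpow_neg_atTop hγ.1).comp hcast
  have hlo : ∀ᶠ N : ℕ in atTop, (N : ℝ) ^ (-γ) ≤ t := he.eventually_le_const ht.1
  have hhi : ∀ᶠ N : ℕ in atTop, t + (N : ℝ) ^ (-γ) + 2 / N ≤ 1 := by
    have h : Tendsto (fun N : ℕ => t + (N : ℝ) ^ (-γ) + 2 / N) atTop (𝓝 (t + 0 + 0)) :=
      (tendsto_const_nhds.add he).add (tendsto_const_nhds.div_atTop hcast)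
    exact h.eventually_le_const (by linarith [ht.2])
  have hone : ∀ᶠ N : ℕ in atTop, 1 ≤ (N : ℝ) ^ (1 - γ) :=
    ((tendsto_rpow_atTop (by linarith [hγ.2])).comp hcast).eventually_ge_atTop 1
  filter_upwards [hlo, hhi, hone, eventually_gt_atTop 0] with N hlo hhi hone hN
  have hN' : (0 : ℝ) < N := by exact_mod_cast hN
  have he : 0 ≤ (N : ℝ) ^ (-γ) := Real.rpow_nonneg hN'.le _
  have hwidth :
      N * (t + (N : ℝ) ^ (-γ)) - N * (t - (N : ℝ) ^ (-γ)) = 2 * (N : ℝ) ^ (1 - γ) := by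
    rw [show (1 : ℝ) - γ = 1 + -γ by ring, Real.rpow_add hN', Real.rpow_one]
    ring
  obtain ⟨hlow, hupp⟩ := card_Icc_ceil_floor_bounds (mul_nonneg hN'.le (sub_nonneg.2 hlo))
    (mul_le_mul_of_nonneg_left (by linarith : t - (N : ℝ) ^ (-γ) ≤ t + (N : ℝ) ^ (-γ))
      hN'.le)
  rw [vN_eq_Icc hN hlo hhi]
  constructor <;> linarith

section FBMCovariance

variable {Ω : Type*} [MeasurableSpace Ω] {P : Measure Ω} {X : ℝ → Ω → ℝ} {σ H : ℝ}

lemma integral_sq_second_diff_of_fbmCov (hX : ∀ t, MemLp (X t) 2 P)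
    (hcov : ∀ s t, ∫ ω, X s ω * X t ω ∂P = fbmCov σ H s t) (hH : 0 < H) {a b c h : ℝ}
    (hh : 0 ≤ h) (hab : b - a = h) (hbc : c - b = h) :
    ∫ ω, (X a ω - 2 * X b ω + X c ω) ^ 2 ∂P = σ ^ 2 * (4 - 2 ^ (2 * H)) * h ^ (2 * H) := by
  rw [integral_sq_sub_two_mul_add hX, hcov, hcov, hcov, hcov, hcov, hcov,
    fbmCov_second_diff hH hh hab hbc]

lemma integral_sum_sq_second_diff_of_fbmCov (hX : ∀ t, MemLp (X t) 2 P)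
    (hcov : ∀ s t, ∫ ω, X s ω * X t ω ∂P = fbmCov σ H s t) (hH : 0 < H) (s : Finset ℕ)
    (N : ℕ) :
    ∫ ω, ∑ p ∈ s, (X ((p : ℝ) / N) ω - 2 * X (((p : ℝ) + 1) / N) ω
        + X (((p : ℝ) + 2) / N) ω) ^ 2 ∂P
      = #s * (σ ^ 2 * (4 - 2 ^ (2 * H)) * (N : ℝ) ^ (-(2 * H))) := by
  have hI : ∀ a b c, Integrable (fun ω => (X a ω - 2 * X b ω + X c ω) ^ 2) P :=
    fun a b c => (((hX a).sub ((hX b).const_mul 2)).add (hX c)).integrable_sq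
  have hterm : ∀ p : ℕ, ∫ ω, (X ((p : ℝ) / N) ω - 2 * X (((p : ℝ) + 1) / N) ω
      + X (((p : ℝ) + 2) / N) ω) ^ 2 ∂P =
        σ ^ 2 * (4 - 2 ^ (2 * H)) * (N : ℝ) ^ (-(2 * H)) := by
    intro p
    rw [Real.rpow_neg (Nat.cast_nonneg N), ← Real.inv_rpow (Nat.cast_nonneg N)]
    exact integral_sq_second_diff_of_fbmCov hX hcov hH (inv_nonneg.2 (Nat.cast_nonneg N))
      (by ring) (by ring)
  rw [integral_finsetSum _ fun p _ => hI _ _ _, Finset.sum_congr rfl fun p _ => hterm p,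
    Finset.sum_const, nsmul_eq_mul]

lemma eventually_integral_quadVar_bounds (hX : ∀ t, MemLp (X t) 2 P)
    (hcov : ∀ s t, ∫ ω, X s ω * X t ω ∂P = fbmCov σ H s t) (hH : H ∈ Set.Ioo 0 1)
    {t γ : ℝ} (ht : t ∈ Set.Ioo 0 1) (hγ : γ ∈ Set.Ioo 0 1) :
    ∀ᶠ N : ℕ in atTop,
      σ ^ 2 * (4 - 2 ^ (2 * H)) * (N : ℝ) ^ (1 - γ - 2 * H) ≤
        ∫ ω, ∑ p ∈ vN t γ N, (X ((p : ℝ) / N) ω - 2 * X (((p : ℝ) + 1) / N) ω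
          + X (((p : ℝ) + 2) / N) ω) ^ 2 ∂P ∧
      ∫ ω, ∑ p ∈ vN t γ N, (X ((p : ℝ) / N) ω - 2 * X (((p : ℝ) + 1) / N) ω
          + X (((p : ℝ) + 2) / N) ω) ^ 2 ∂P ≤
        3 * (σ ^ 2 * (4 - 2 ^ (2 * H))) * (N : ℝ) ^ (1 - γ - 2 * H) := by
  filter_upwards [eventually_card_vN_bounds ht hγ, eventually_gt_atTop 0] with N hcard hN
  have hN' : (0 : ℝ) < N := by exact_mod_cast hN
  have hsplit :
      (N : ℝ) ^ (1 - γ - 2 * H) = (N : ℝ) ^ (1 - γ) * (N : ℝ) ^ (-(2 * H)) := by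
    rw [← Real.rpow_add hN', sub_eq_add_neg]
  have hscale : 0 ≤ σ ^ 2 * (4 - 2 ^ (2 * H)) * (N : ℝ) ^ (-(2 * H)) :=
    mul_nonneg (mul_nonneg (sq_nonneg σ) (sub_nonneg.2 (two_rpow_two_mul_lt_four hH.2).le))
      (Real.rpow_nonneg hN'.le _)
  rw [integral_sum_sq_second_diff_of_fbmCov hX hcov hH.1, hsplit]
  constructor
  · nlinarith [mul_le_mul_of_nonneg_right hcard.1 hscale]
  · nlinarith [mul_le_mul_of_nonneg_right hcard.2 hscale]

end FBMCovariance

theorem holder_estimator_converges_to_hurst_general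
    {Ω : Type*} [MeasurableSpace Ω] (P : Measure Ω)
    (H σ : ℝ) (hH : H ∈ Set.Ioo (0 : ℝ) 1) (hσ : 0 < σ)
    (X : ℝ → Ω → ℝ)
    (hL2 : ∀ t : ℝ, MemLp (X t) 2 P)
    (hcov : ∀ s t : ℝ, ∫ ω, X s ω * X t ω ∂P
      = (σ ^ 2 / 2) * (|s| ^ (2 * H) + |t| ^ (2 * H) - |s - t| ^ (2 * H)))
    (t γ : ℝ) (ht : t ∈ Set.Ioo (0 : ℝ) 1) (hγ : γ ∈ Set.Ioo (0 : ℝ) 1) :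
    Tendsto (fun N : ℕ =>
        (1 / 2 : ℝ) * ((1 - γ) -
          Real.log (∫ ω, ∑ p ∈ vN t γ N,
            (X ((p : ℝ) / N) ω - 2 * X (((p : ℝ) + 1) / N) ω
              + X (((p : ℝ) + 2) / N) ω) ^ 2 ∂P) / Real.log N))
      atTop (nhds H) := by
  have hK : 0 < σ ^ 2 * (4 - 2 ^ (2 * H)) :=
    mul_pos (pow_pos hσ 2) (sub_pos.2 (two_rpow_two_mul_lt_four hH.2))
  have hlim := tendsto_log_div_log_of_le_of_le hK
    (eventually_integral_quadVar_bounds hL2 hcov hH ht hγ)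
  convert (hlim.const_sub (1 - γ)).const_mul (1 / 2 : ℝ) using 2
  ring

/-- For a centered process with fBm covariance of Hurst parameter `H`
and scale `σ`, and `t ∈ (0,1)`, `γ ∈ (0,1)`, the second-moment version of the Hölder
exponent estimator converges to the Hurst parameter:
`lim_{N→∞} (1/2)((1-γ) - log(E(V_N^(1)(t)))/log N) = H`. -/
theorem holder_estimator_converges_to_hurst
    {Ω : Type*} [MeasurableSpace Ω] (P : Measure Ω) [IsProbabilityMeasure P]
    (H σ : ℝ) (hH : H ∈ Set.Ioo (0 : ℝ) 1) (hσ : 0 < σ)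
    (X : ℝ → Ω → ℝ)
    (hL2 : ∀ t : ℝ, MemLp (X t) 2 P)
    (hmean : ∀ t : ℝ, ∫ ω, X t ω ∂P = 0)
    (hcov : ∀ s t : ℝ, ∫ ω, X s ω * X t ω ∂P
      = (σ ^ 2 / 2) * (|s| ^ (2 * H) + |t| ^ (2 * H) - |s - t| ^ (2 * H)))
    (t γ : ℝ) (ht : t ∈ Set.Ioo (0 : ℝ) 1) (hγ : γ ∈ Set.Ioo (0 : ℝ) 1) :
    Tendsto (fun N : ℕ =>
        (1 / 2 : ℝ) * ((1 - γ) -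
          Real.log (∫ ω, ∑ p ∈ vN t γ N,
            (X ((p : ℝ) / N) ω - 2 * X (((p : ℝ) + 1) / N) ω
              + X (((p : ℝ) + 2) / N) ω) ^ 2 ∂P) / Real.log N))
      atTop (nhds H) :=
  holder_estimator_converges_to_hurst_general P H σ hH hσ X hL2 hcov t γ ht hγ
end

section
/- For every integer d ≥ 1 and every real H ∈ (0, 1], the fractional Brownian field kernel K(s, t) = ‖s‖^{2H} + ‖t‖^{2H} − ‖s − t‖^{2H} on ℝ^d is positive semidefinite: for every n ≥ 1, all points t₁, …, t_n ∈ ℝ^d and all real coefficients a₁, …, a_n, one has Σ_{i=1}^n Σ_{j=1}^n a_i a_j (‖t_i‖^{2H} + ‖t_j‖^{2H} − ‖t_i − t_j‖^{2H}) ≥ 0. (This is the positive semidefiniteness underlying the existence of the fractional Brownian field of Hurst parameter H.) -/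
/-!
Adding the origin as an extra point with weight `-∑ aᵢ` shows that the kernel is positive
semidefinite as soon as `(x, y) ↦ ‖x - y‖ ^ (2H)` is conditionally negative definite
(Schoenberg). For `H = 1` this follows from `‖x - y‖² = ‖x‖² + ‖y‖² - 2⟪x, y⟫`. For `H < 1`,
`r ^ H` is a positive multiple of `∫₀^∞ (1 - e^{-lr}) l^{-1-H} dl`, so `‖x - y‖ ^ (2H)` is a
mixture of the kernels `1 - e^{-l‖x - y‖²}`; these are conditionally negative definite because
the Gaussian kernel `e^{-l‖x - y‖²} = e^{-l‖x‖²} e^{2l⟪x, y⟫} e^{-l‖y‖²}` is positive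
semidefinite, `e^{2l⟪x, y⟫}` being a nonnegative series of Schur powers of the Gram matrix.
-/

open Real MeasureTheory Set

def IsPosSemidefKernel {X : Type*} (K : X → X → ℝ) : Prop :=
  ∀ (n : ℕ) (t : Fin n → X) (a : Fin n → ℝ), 0 ≤ ∑ i, ∑ j, a i * a j * K (t i) (t j)

def IsCondNegDefKernel {X : Type*} (N : X → X → ℝ) : Prop :=
  ∀ (n : ℕ) (t : Fin n → X) (c : Fin n → ℝ),
    ∑ i, c i = 0 → ∑ i, ∑ j, c i * c j * N (t i) (t j) ≤ 0

namespace IsPosSemidefKernel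

variable {X : Type*} {K : X → X → ℝ}

theorem const_mul (hK : IsPosSemidefKernel K) {b : ℝ} (hb : 0 ≤ b) :
    IsPosSemidefKernel fun x y => b * K x y := by
  intro n t a
  have h : ∑ i, ∑ j, a i * a j * (b * K (t i) (t j)) =
      b * ∑ i, ∑ j, a i * a j * K (t i) (t j) := by
    simp only [Finset.mul_sum]
    exact Finset.sum_congr rfl fun i _ => Finset.sum_congr rfl fun j _ => by ring
  exact h ▸ mul_nonneg hb (hK n t a)

theorem mul_apply_mul (hK : IsPosSemidefKernel K) (f : X → ℝ) :
    IsPosSemidefKernel fun x y => f x * K x y * f y := by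
  intro n t a
  convert hK n t (fun i => a i * f (t i)) using 3
  ring

theorem of_posSemidef
    (hK : ∀ (n : ℕ) (t : Fin n → X), (Matrix.of fun i j => K (t i) (t j)).PosSemidef) :
    IsPosSemidefKernel K := by
  intro n t a
  refine le_of_le_of_eq ((hK n t).dotProduct_mulVec_nonneg a) ?_
  simp only [dotProduct, Matrix.mulVec, Matrix.of_apply, star_trivial, Finset.mul_sum]
  exact Finset.sum_congr rfl fun i _ => Finset.sum_congr rfl fun j _ => by ring

theorem of_hasSum {L : ℕ → X → X → ℝ} (hL : ∀ m, IsPosSemidefKernel (L m))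
    (hK : ∀ x y, HasSum (fun m => L m x y) (K x y)) : IsPosSemidefKernel K := by
  intro n t a
  exact (hasSum_sum fun i _ => hasSum_sum fun j _ => (hK (t i) (t j)).mul_left _).nonneg
    fun m => hL m n t a

theorem isCondNegDefKernel_sub (hK : IsPosSemidefKernel K) (f g : X → ℝ) :
    IsCondNegDefKernel fun x y => f x + g y - K x y := by
  intro n t c hc
  have h : ∑ i, ∑ j, c i * c j * (f (t i) + g (t j) - K (t i) (t j)) =
      (∑ i, c i * f (t i)) * ∑ j, c j + (∑ i, c i) * (∑ j, c j * g (t j)) -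
        ∑ i, ∑ j, c i * c j * K (t i) (t j) := by
    simp only [Finset.sum_mul_sum, ← Finset.sum_sub_distrib, ← Finset.sum_add_distrib]
    exact Finset.sum_congr rfl fun i _ => Finset.sum_congr rfl fun j _ => by ring
  rw [h, hc]
  linarith [hK n t c]

end IsPosSemidefKernel

namespace IsCondNegDefKernel

variable {X : Type*} {N : X → X → ℝ}

theorem mul_const (hN : IsCondNegDefKernel N) {b : ℝ} (hb : 0 ≤ b) :
    IsCondNegDefKernel fun x y => N x y * b := by
  intro n t c hc
  have h : ∑ i, ∑ j, c i * c j * (N (t i) (t j) * b) =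
      (∑ i, ∑ j, c i * c j * N (t i) (t j)) * b := by
    simp only [Finset.sum_mul, mul_assoc]
  exact h ▸ mul_nonpos_of_nonpos_of_nonneg (hN n t c hc) hb

theorem integral {Λ : Type*} [MeasurableSpace Λ] {μ : Measure Λ} {N : Λ → X → X → ℝ}
    (hN : ∀ᵐ l ∂μ, IsCondNegDefKernel (N l)) (hint : ∀ x y, Integrable (fun l => N l x y) μ) :
    IsCondNegDefKernel fun x y => ∫ l, N l x y ∂μ := by
  intro n t c hc
  have h : ∑ i, ∑ j, c i * c j * ∫ l, N l (t i) (t j) ∂μ =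
      ∫ l, ∑ i, ∑ j, c i * c j * N l (t i) (t j) ∂μ := by
    rw [integral_finsetSum _ fun i _ => integrable_finsetSum _ fun j _ => (hint _ _).const_mul _]
    refine Finset.sum_congr rfl fun i _ => ?_
    rw [integral_finsetSum _ fun j _ => (hint _ _).const_mul _]
    simp only [integral_const_mul]
  rw [h]
  refine integral_nonpos_of_ae ?_
  filter_upwards [hN] with l hl using hl n t c hc

theorem isPosSemidefKernel_sub (hN : IsCondNegDefKernel N) (o : X) :
    IsPosSemidefKernel fun x y => N x o + N o y - N x y - N o o := by
  intro n t a
  set S := ∑ i, a i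
  set A := ∑ i, a i * N (t i) o
  set B := ∑ j, a j * N o (t j)
  -- the CND inequality for the points `o, t 0, …, t (n-1)` with weights `-S, a 0, …, a (n-1)`
  have hext := hN (n + 1) (Fin.cons o t) (Fin.cons (-S) a) (by simp [Fin.sum_univ_succ, S])
  simp only [Fin.sum_univ_succ, Fin.cons_zero, Fin.cons_succ, Finset.sum_add_distrib] at hext
  have hA : ∑ i, a i * -S * N (t i) o = -S * A := by
    rw [Finset.mul_sum]
    exact Finset.sum_congr rfl fun i _ => by ring
  have hB : ∑ j, -S * a j * N o (t j) = -S * B := by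
    rw [Finset.mul_sum]
    exact Finset.sum_congr rfl fun j _ => by ring
  have hA' : ∑ i, ∑ j, a i * a j * N (t i) o = A * S := by
    rw [Finset.sum_mul_sum]
    exact Finset.sum_congr rfl fun i _ => Finset.sum_congr rfl fun j _ => by ring
  have hB' : ∑ i, ∑ j, a i * a j * N o (t j) = S * B := by
    rw [Finset.sum_mul_sum]
    exact Finset.sum_congr rfl fun i _ => Finset.sum_congr rfl fun j _ => by ring
  have hO : ∑ i, ∑ j, a i * a j * N o o = S * S * N o o := by
    rw [Finset.sum_mul_sum, Finset.sum_mul]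
    simp only [Finset.sum_mul]
  simp only [mul_add, mul_sub, Finset.sum_add_distrib, Finset.sum_sub_distrib, hA', hB', hO]
  rw [hA, hB] at hext
  linarith

end IsCondNegDefKernel

noncomputable def rpowIntegrand (H r l : ℝ) : ℝ := (1 - exp (-(l * r))) * l ^ (-1 - H)

section rpowIntegrand

variable {H r l : ℝ}

theorem rpowIntegrand_nonneg (hr : 0 ≤ r) (hl : 0 ≤ l) : 0 ≤ rpowIntegrand H r l :=
  mul_nonneg (sub_nonneg.2 (exp_le_one_iff.2 (neg_nonpos.2 (by positivity)))) (rpow_nonneg hl _)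

theorem rpowIntegrand_pos (hr : 0 < r) (hl : 0 < l) : 0 < rpowIntegrand H r l :=
  mul_pos (sub_pos.2 (exp_lt_one_iff.2 (neg_lt_zero.2 (by positivity)))) (rpow_pos_of_pos hl _)

theorem rpowIntegrand_one_le_rpow_neg (hl : 0 < l) : rpowIntegrand H 1 l ≤ l ^ (-H) := by
  calc rpowIntegrand H 1 l ≤ l * l ^ (-1 - H) := by
        unfold rpowIntegrand
        gcongr
        linarith [add_one_le_exp (-(l * 1))]
    _ = l ^ (-H) := by rw [mul_comm, ← rpow_add_one hl.ne']; ring_nf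

theorem rpowIntegrand_one_le (hl : 0 < l) : rpowIntegrand H 1 l ≤ l ^ (-1 - H) := by
  unfold rpowIntegrand
  exact mul_le_of_le_one_left (rpow_nonneg hl.le _) (by linarith [exp_pos (-(l * 1))])

theorem continuousOn_rpowIntegrand : ContinuousOn (rpowIntegrand H r) (Ioi 0) :=
  (by fun_prop : Continuous fun l => 1 - exp (-(l * r))).continuousOn.mul
    fun l hl => (continuousAt_rpow_const l _ (Or.inl hl.ne')).continuousWithinAt

theorem rpowIntegrand_eq_mul_rpowIntegrand_one (hr : 0 < r) (hl : 0 < l) :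
    rpowIntegrand H r l = r ^ (1 + H) * rpowIntegrand H 1 (r * l) := by
  unfold rpowIntegrand
  rw [mul_rpow hr.le hl.le, mul_one, mul_comm l r]
  calc _ = (r ^ (1 + H) * r ^ (-1 - H)) * ((1 - exp (-(r * l))) * l ^ (-1 - H)) := by
        rw [← rpow_add hr]; norm_num
    _ = _ := by ring

theorem integrableOn_rpowIntegrand_one (hH0 : 0 < H) (hH1 : H < 1) :
    IntegrableOn (rpowIntegrand H 1) (Ioi 0) := by
  rw [← Ioc_union_Ioi_eq_Ioi zero_le_one]
  refine IntegrableOn.union ?_ ?_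
  · have hdom : IntegrableOn (fun l : ℝ => l ^ (-H)) (Ioc 0 1) :=
      (intervalIntegrable_iff_integrableOn_Ioc_of_le zero_le_one).1
        (intervalIntegral.intervalIntegrable_rpow' (by linarith))
    refine hdom.mono' ((continuousOn_rpowIntegrand.mono Ioc_subset_Ioi_self).aestronglyMeasurable
      measurableSet_Ioc) ((ae_restrict_iff' measurableSet_Ioc).2 (.of_forall fun l hl => ?_))
    rw [norm_of_nonneg (rpowIntegrand_nonneg zero_le_one hl.1.le)]
    exact rpowIntegrand_one_le_rpow_neg hl.1
  · have hdom : IntegrableOn (fun l : ℝ => l ^ (-1 - H)) (Ioi 1) :=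
      integrableOn_Ioi_rpow_of_lt (by linarith) one_pos
    refine hdom.mono'
      ((continuousOn_rpowIntegrand.mono (Ioi_subset_Ioi zero_le_one)).aestronglyMeasurable
        measurableSet_Ioi) ((ae_restrict_iff' measurableSet_Ioi).2 (.of_forall fun l hl => ?_))
    have hl0 : (0 : ℝ) < l := zero_lt_one.trans hl
    rw [norm_of_nonneg (rpowIntegrand_nonneg zero_le_one hl0.le)]
    exact rpowIntegrand_one_le hl0

theorem integrableOn_rpowIntegrand (hH0 : 0 < H) (hH1 : H < 1) (hr : 0 ≤ r) :
    IntegrableOn (rpowIntegrand H r) (Ioi 0) := by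
  rcases hr.eq_or_lt with rfl | hr
  · have : rpowIntegrand H 0 = 0 := funext fun l => by simp [rpowIntegrand]
    exact this ▸ integrableOn_zero
  have hscaled : IntegrableOn (fun l => rpowIntegrand H 1 (r * l)) (Ioi 0) := by
    rw [integrableOn_Ioi_comp_mul_left_iff (rpowIntegrand H 1) 0 hr, mul_zero]
    exact integrableOn_rpowIntegrand_one hH0 hH1
  exact (integrableOn_congr_fun (s := Ioi 0)
    (fun l hl => rpowIntegrand_eq_mul_rpowIntegrand_one hr hl) measurableSet_Ioi).2
    (hscaled.const_mul _)

theorem integral_rpowIntegrand (hH0 : 0 < H) (hr : 0 ≤ r) :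
    ∫ l in Ioi 0, rpowIntegrand H r l = (∫ l in Ioi 0, rpowIntegrand H 1 l) * r ^ H := by
  rcases hr.eq_or_lt with rfl | hr
  · simp [rpowIntegrand, zero_rpow hH0.ne']
  rw [setIntegral_congr_fun measurableSet_Ioi
      fun l hl => rpowIntegrand_eq_mul_rpowIntegrand_one hr hl, integral_const_mul,
    integral_comp_mul_left_Ioi (rpowIntegrand H 1) 0 hr, mul_zero, smul_eq_mul,
    ← mul_assoc, mul_comm _ (r ^ H), ← rpow_neg_one r, ← rpow_add hr]
  norm_num

theorem integral_rpowIntegrand_one_pos (hH0 : 0 < H) (hH1 : H < 1) :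
    0 < ∫ l in Ioi 0, rpowIntegrand H 1 l := by
  rw [setIntegral_pos_iff_support_of_nonneg_ae ((ae_restrict_iff' measurableSet_Ioi).2
    (.of_forall fun l hl => rpowIntegrand_nonneg zero_le_one hl.le))
    (integrableOn_rpowIntegrand_one hH0 hH1)]
  refine lt_of_lt_of_le (by simp : (0 : ENNReal) < volume (Ioi (0 : ℝ)))
    (measure_mono fun l hl => ⟨(rpowIntegrand_pos zero_lt_one hl).ne', hl⟩)

end rpowIntegrand

section InnerProductSpace

variable {E : Type*} [NormedAddCommGroup E] [InnerProductSpace ℝ E]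

theorem isPosSemidefKernel_inner_pow (k : ℕ) :
    IsPosSemidefKernel fun x y : E => inner ℝ x y ^ k := by
  refine IsPosSemidefKernel.of_posSemidef fun n t => ?_
  induction k with
  | zero => simpa [Matrix.vecMulVec] using Matrix.posSemidef_vecMulVec_self_star (1 : Fin n → ℝ)
  | succ k ih =>
    have hsucc : (Matrix.of fun i j => inner ℝ (t i) (t j) ^ (k + 1)) =
        (Matrix.of fun i j => inner ℝ (t i) (t j) ^ k).hadamard (Matrix.gram ℝ t) := by
      ext i j
      simp [pow_succ]
    exact hsucc ▸ ih.hadamard (Matrix.posSemidef_gram ℝ t)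

theorem isPosSemidefKernel_exp_mul_inner {c : ℝ} (hc : 0 ≤ c) :
    IsPosSemidefKernel fun x y : E => exp (c * inner ℝ x y) := by
  refine IsPosSemidefKernel.of_hasSum
    (L := fun m x y => c ^ m / m.factorial * inner ℝ x y ^ m)
    (fun m => (isPosSemidefKernel_inner_pow m).const_mul (by positivity)) fun x y => ?_
  rw [exp_eq_exp_ℝ]
  exact (NormedSpace.expSeries_div_hasSum_exp (c * inner ℝ x y)).congr_fun fun m => by ring

theorem isPosSemidefKernel_exp_neg_mul_norm_sub_sq {l : ℝ} (hl : 0 ≤ l) :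
    IsPosSemidefKernel fun x y : E => exp (-(l * ‖x - y‖ ^ 2)) := by
  convert (isPosSemidefKernel_exp_mul_inner (E := E) (by positivity : 0 ≤ 2 * l)).mul_apply_mul
    fun x => exp (-(l * ‖x‖ ^ 2)) using 3 with x y
  rw [norm_sub_sq_real, ← exp_add, ← exp_add]
  ring_nf

theorem isCondNegDefKernel_norm_sub_sq : IsCondNegDefKernel fun x y : E => ‖x - y‖ ^ 2 := by
  convert ((isPosSemidefKernel_inner_pow (E := E) 1).const_mul zero_le_two).isCondNegDefKernel_sub
    (fun x => ‖x‖ ^ 2) (fun y => ‖y‖ ^ 2) using 3 with x y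
  rw [norm_sub_sq_real]
  ring

theorem isCondNegDefKernel_norm_sub_rpow {H : ℝ} (hH0 : 0 < H) (hH1 : H ≤ 1) :
    IsCondNegDefKernel fun x y : E => ‖x - y‖ ^ (2 * H) := by
  obtain rfl | hH1 := hH1.eq_or_lt
  · simpa using isCondNegDefKernel_norm_sub_sq (E := E)
  have hC := integral_rpowIntegrand_one_pos hH0 hH1
  have hint :
      IsCondNegDefKernel fun x y : E => ∫ l in Ioi 0, rpowIntegrand H (‖x - y‖ ^ 2) l := by
    refine IsCondNegDefKernel.integral ((ae_restrict_iff' measurableSet_Ioi).2 (.of_forall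
      fun l hl => ?_)) fun x y => integrableOn_rpowIntegrand hH0 hH1 (sq_nonneg _)
    simpa [rpowIntegrand] using ((isPosSemidefKernel_exp_neg_mul_norm_sub_sq (E := E) hl.le
      ).isCondNegDefKernel_sub 1 0).mul_const (rpow_nonneg hl.le (-1 - H))
  convert hint.mul_const (inv_nonneg.2 hC.le) using 3 with x y
  rw [integral_rpowIntegrand hH0 (sq_nonneg _), ← rpow_natCast, ← rpow_mul (norm_nonneg _)]
  field_simp
  ring_nf

end InnerProductSpace

theorem fbf_kernel_posSemidef_general
    (d : ℕ) (H : ℝ) (hH0 : 0 < H) (hH1 : H ≤ 1) :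
    ∀ (n : ℕ), 1 ≤ n → ∀ (t : Fin n → EuclideanSpace ℝ (Fin d)) (a : Fin n → ℝ),
      0 ≤ ∑ i, ∑ j, a i * a j *
        (‖t i‖ ^ (2 * H) + ‖t j‖ ^ (2 * H) - ‖t i - t j‖ ^ (2 * H)) := by
  intro n _ t a
  simpa [zero_rpow (mul_pos two_pos hH0).ne'] using
    (isCondNegDefKernel_norm_sub_rpow hH0 hH1).isPosSemidefKernel_sub 0 n t a

/-- For every `d ≥ 1` and every `H ∈ (0,1]`, the fractional Brownian
field kernel `K(s,t) = ‖s‖^(2H) + ‖t‖^(2H) - ‖s - t‖^(2H)` on `ℝ^d` is positive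
semidefinite: all finite quadratic forms built from it are nonnegative. -/
theorem fbf_kernel_posSemidef
    (d : ℕ) (hd : 1 ≤ d) (H : ℝ) (hH0 : 0 < H) (hH1 : H ≤ 1) :
    ∀ (n : ℕ), 1 ≤ n → ∀ (t : Fin n → EuclideanSpace ℝ (Fin d)) (a : Fin n → ℝ),
      0 ≤ ∑ i, ∑ j, a i * a j *
        (‖t i‖ ^ (2 * H) + ‖t j‖ ^ (2 * H) - ‖t i - t j‖ ^ (2 * H)) :=
  fbf_kernel_posSemidef_general d H hH0 hH1
end
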